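/- arXiv:2111.12412 — 3 statements merged into one kernel-verified Lean document; each statement's English description precedes it below -/
import Mathlib

section
/- If G is an r-shallow minor of H ⊠ L ⊠ K_ℓ where H has treewidth at most t and the r-th power of L has maximum degree at most k, then G is contained in J ⊠ L^{2r+1} ⊠ K_{ℓ(k+1)} for some graph J of treewidth at most C(2r+1+t, t) − 1. -/
/-!
Root a tree decomposition `(T, W)` of `H` of width `t`. The projection of a branch set `μ v` to
`H` has radius at most `r`, so the nodes whose bags meet it form a subtree; represent `v` by a
vertex `h v` of the projection lying in the bag of the top node of that subtree. Then `J` is the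
image of `G` under `h`, and its bag at `x` collects the `h v` whose subtree contains `x`.

A vertex `h v` in the bag at `x` is joined to the bag `W x` by a walk in `H` of length at most
`2r`. Each step of the walk either stays below the current node of the root path of `x`, or jumps
up to the top node of the current vertex, an ancestor of `x`. Hence `h v` is reachable from `x` by
at most `2r` jumps through bags of size `t + 1` along that path, and processing jumps by increasing
target bounds the number of such labels by `C(2r+1+t, t)`.

The `L`-coordinate of `v` is that of the center of `μ v`; the representative's `L`-coordinate lies
in the closed `r`-ball around it, of size at most `k + 1`, which together with its `K_ℓ`-coordinate
gives an injective index into `Fin (ℓ * (k + 1))`.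
-/

open SimpleGraph

variable {V W : Type}

/-- The strong product of two simple graphs. -/
def strongProd (G : SimpleGraph V) (H : SimpleGraph W) : SimpleGraph (V × W) where
  Adj a b := a ≠ b ∧ (a.1 = b.1 ∨ G.Adj a.1 b.1) ∧ (a.2 = b.2 ∨ H.Adj a.2 b.2)
  symm := by
    constructor
    rintro a b ⟨hne, h1, h2⟩
    exact ⟨hne.symm, by tauto, by tauto⟩
  loopless := ⟨fun a h => h.1 rfl⟩

infixl:70 " ⊠ " => strongProd

/-- The lexicographic product of two simple graphs. -/
def lexProd (G : SimpleGraph V) (H : SimpleGraph W) : SimpleGraph (V × W) where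
  Adj a b := G.Adj a.1 b.1 ∨ (a.1 = b.1 ∧ H.Adj a.2 b.2)
  symm := by
    constructor
    rintro a b (h | ⟨h, h'⟩)
    · exact Or.inl h.symm
    · exact Or.inr ⟨h.symm, h'.symm⟩
  loopless := by
    constructor
    rintro a (h | ⟨_, h⟩)
    · exact G.loopless.irrefl _ h
    · exact H.loopless.irrefl _ h

/-- `G` is contained in `H`: `G` is isomorphic to a subgraph of `H`. -/
def Contains (G : SimpleGraph V) (H : SimpleGraph W) : Prop :=
  ∃ f : V → W, Function.Injective f ∧ ∀ ⦃u v⦄, G.Adj u v → H.Adj (f u) (f v)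

/-- `(T, B)` is a tree-decomposition of `G`. -/
def IsTreeDecomp {ι : Type} (G : SimpleGraph V) (T : SimpleGraph ι) (B : ι → Set V) : Prop :=
  T.IsTree ∧
  (∀ ⦃u v⦄, G.Adj u v → ∃ i, u ∈ B i ∧ v ∈ B i) ∧
  (∀ v : V, (T.induce {i | v ∈ B i}).Connected)

/-- The treewidth of `G` is at most `t`. -/
def TreewidthLE (G : SimpleGraph V) (t : ℕ) : Prop :=
  ∃ (ι : Type) (T : SimpleGraph ι) (B : ι → Set V),
    IsTreeDecomp G T B ∧ ∀ i, (B i).Finite ∧ (B i).ncard ≤ t + 1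

/-- The row treewidth of `G` is at most `t`: `G` is contained in `H ⊠ P`
for some graph `H` of treewidth at most `t` and some path `P`. -/
def RowTreewidthLE (G : SimpleGraph V) (t : ℕ) : Prop :=
  ∃ (ι : Type) (H : SimpleGraph ι) (n : ℕ),
    TreewidthLE H t ∧ Contains G (H ⊠ pathGraph n)

/-- `μ` is a model of an `r`-shallow minor `H` in `G`: branch sets are connected,
pairwise disjoint, of radius at most `r`, with adjacent branch sets for each edge of `H`. -/
def IsShallowMinorModel (H : SimpleGraph W) (G : SimpleGraph V) (r : ℕ) (μ : W → Set V) : Prop :=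
  (∀ w, (G.induce (μ w)).Connected) ∧
  (∀ w, ∃ c : μ w, ∀ u : μ w, (G.induce (μ w)).dist c u ≤ r) ∧
  (Pairwise fun w w' => Disjoint (μ w) (μ w')) ∧
  (∀ ⦃w w'⦄, H.Adj w w' → ∃ u ∈ μ w, ∃ v ∈ μ w', G.Adj u v)

/-- `H` is an `r`-shallow minor of `G`. -/
def ShallowMinor (H : SimpleGraph W) (G : SimpleGraph V) (r : ℕ) : Prop :=
  ∃ μ : W → Set V, IsShallowMinorModel H G r μ

/-- `H` is an `(m/2)`-shallow topological minor of `G`: a subgraph of `G` is an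
`m`-subdivision of `H`, i.e. each edge of `H` is replaced by a path of length at most `m+1`,
and these paths are internally disjoint. -/
def ShallowTopMinor (H : SimpleGraph W) (G : SimpleGraph V) (m : ℕ) : Prop :=
  ∃ f : W → V, Function.Injective f ∧
  ∃ P : ∀ ⦃u v⦄, H.Adj u v → G.Walk (f u) (f v),
    (∀ ⦃u v⦄ (h : H.Adj u v), (P h).IsPath ∧ (P h).length ≤ m + 1 ∧
      ∀ x ∈ (P h).support, x ∈ Set.range f → (x = f u ∨ x = f v)) ∧
    (∀ ⦃u v x y⦄ (h₁ : H.Adj u v) (h₂ : H.Adj x y), s(u,v) ≠ s(x,y) →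
      ∀ z ∈ (P h₁).support, z ∈ (P h₂).support →
        (z = f u ∨ z = f v) ∧ (z = f x ∨ z = f y))

/-- The `s`-th power of a graph: vertices at distance at most `s` are adjacent. -/
def powG (G : SimpleGraph V) (s : ℕ) : SimpleGraph V where
  Adj u v := u ≠ v ∧ ∃ p : G.Walk u v, p.length ≤ s
  symm := by
    constructor
    rintro u v ⟨h, p, hp⟩
    exact ⟨h.symm, p.reverse, by simpa using hp⟩
  loopless := ⟨fun v h => h.1 rfl⟩

/-- The maximum degree of `G` is at most `d`. -/
def MaxDegLE (G : SimpleGraph V) (d : ℕ) : Prop :=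
  ∀ v, (G.neighborSet v).Finite ∧ (G.neighborSet v).ncard ≤ d

/-! ## Counting labels reachable along a path -/

section Reach

open Finset

/-- Bound on the labels that `reach i g` adds to a set `A` accounting for `c` labels at `g` with
their jumps and `d` labels starting at `g` (see `ReachAbsorbs`). -/
def reachBound (t : ℕ) : ℕ → ℕ → ℕ → ℕ
  | 0, c, d => t + 1 - c - d
  | i + 1, c, d => (t + 1 - c - d) + ∑ e ∈ range (t + 1 - c - d), reachBound t i (c + e) 1

lemma sum_range_sub_add_choose (n k : ℕ) :
    ∑ e ∈ range (n + 1), (n - e + k).choose k = (n + k + 1).choose (k + 1) := by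
  rw [← Nat.sum_range_add_choose, ← sum_range_reflect]
  exact sum_congr rfl fun e he => by rw [mem_range] at he; congr 2; omega

lemma reachBound_one_add_one (t i c : ℕ) :
    reachBound t i c 1 + 1 = (t - c + i + 1).choose (i + 1) := by
  induction i generalizing c with
  | zero => simp [reachBound]; omega
  | succ i ih =>
    have key : ∑ e ∈ range (t - c), (reachBound t i (c + e) 1 + 1) =
        ∑ e ∈ range (t - c), (t - c - e + (i + 1)).choose (i + 1) :=
      sum_congr rfl fun e _ => by rw [ih]; congr 1; omega
    rw [sum_add_distrib, sum_const, card_range, smul_eq_mul, mul_one] at key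
    have hs : t + 1 - c - 1 = t - c := by omega
    rw [reachBound, hs, ← sum_range_sub_add_choose, sum_range_succ, ← key]
    simp only [Nat.sub_self, zero_add, Nat.choose_self]
    ring

lemma reachBound_zero_zero (t i : ℕ) : reachBound t i 0 0 = (i + t + 1).choose t := by
  cases i with
  | zero => simp [reachBound]
  | succ i =>
    have key : ∑ e ∈ range (t + 1), (reachBound t i e 1 + 1) =
        ∑ e ∈ range (t + 1), (t - e + (i + 1)).choose (i + 1) :=
      sum_congr rfl fun e _ => by rw [reachBound_one_add_one, add_assoc]
    rw [sum_add_distrib, sum_const, card_range, smul_eq_mul, mul_one,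
      sum_range_sub_add_choose] at key
    rw [reachBound, Nat.sub_zero, Nat.sub_zero]
    simp only [zero_add]
    rw [add_comm, key, show i + 1 + t + 1 = t + (i + 2) by ring, Nat.choose_symm_add]
    rfl

variable {Λ : Type*} (D : ℕ → Finset Λ) (av : Λ → ℕ)

def IsDownClosed : Prop := ∀ l n m, l ∈ D n → av l ≤ m → m ≤ n → l ∈ D m

variable [DecidableEq Λ]

/-- In the application the points are the depths along a root path of a tree decomposition,
`D n` is the bag at depth `n` and `av w` is the depth of the top node of `w`. -/
def reach : ℕ → ℕ → Finset Λ
  | 0, n => D n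
  | i + 1, n => D n ∪ ((D n).filter (av · < n)).biUnion fun w => reach i (av w)

variable {D av}

lemma subset_reach (i n : ℕ) : D n ⊆ reach D av i n := by
  cases i with
  | zero => exact subset_rfl
  | succ i => exact subset_union_left

lemma reach_subset_reach_succ (i n : ℕ) : reach D av i n ⊆ reach D av (i + 1) n := by
  induction i generalizing n with
  | zero => exact subset_union_left
  | succ i ih =>
    exact union_subset_union subset_rfl (biUnion_mono fun w _ => ih (av w))

lemma reach_mono {i j : ℕ} (h : i ≤ j) (n : ℕ) : reach D av i n ⊆ reach D av j n := by
  induction h with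
  | refl => exact subset_rfl
  | step _ ih => exact ih.trans (reach_subset_reach_succ _ n)

lemma reach_subset_of_mem {i n : ℕ} {w : Λ} (hw : w ∈ D n) (h : av w ≤ n) :
    reach D av i (av w) ⊆ reach D av (i + 1) n := by
  rcases h.lt_or_eq with h | h
  · exact (subset_biUnion_of_mem (fun w => reach D av i (av w)) (mem_filter.2 ⟨hw, h⟩)).trans
      subset_union_right
  · rw [h]
    exact reach_subset_reach_succ i n

variable (D av) in
structure ReachAbsorbs (i g : ℕ) (A S E : Finset Λ) : Prop where
  union_subset : S ∪ E ⊆ A ∩ D g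
  lt_of_mem_left : ∀ l ∈ S, av l < g
  reach_subset : ∀ l ∈ S, reach D av i (av l) ⊆ A
  eq_of_mem_right : ∀ l ∈ E, av l = g

lemma ReachAbsorbs.card_sdiff_le {t i g : ℕ} {A S E : Finset Λ}
    (h : ReachAbsorbs D av i g A S E) (hcard : (D g).card ≤ t + 1) :
    (D g \ (S ∪ E)).card ≤ t + 1 - S.card - E.card := by
  have hdisj : Disjoint S E := disjoint_left.2 fun l hS hE =>
    (h.lt_of_mem_left l hS).ne (h.eq_of_mem_right l hE)
  rw [card_sdiff_of_subset (h.union_subset.trans inter_subset_right),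
    card_union_of_disjoint hdisj]
  omega

variable (D av) in
def ReachBoundHolds (t i : ℕ) : Prop :=
  ∀ g A S E, ReachAbsorbs D av i g A S E →
    (reach D av i g \ A).card ≤ reachBound t i S.card E.card

lemma reachBoundHolds_zero {t : ℕ} (hcard : ∀ n, (D n).card ≤ t + 1) :
    ReachBoundHolds D av t 0 := fun g _ _ _ h =>
  (card_le_card (sdiff_subset_sdiff subset_rfl (h.union_subset.trans inter_subset_left))).trans
    (h.card_sdiff_le (hcard g))

lemma reachAbsorbs_union_of_max (hconv : IsDownClosed D av)
    {i g : ℕ} {A S s : Finset Λ} {w : Λ} (hw : w ∈ A ∩ D g) (hwg : av w ≤ g)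
    (hs : ∀ x ∈ s, x ∈ A ∩ D g ∧ av x < av w)
    (hS : ∀ l ∈ S, l ∈ A ∩ D g ∧ av l < av w ∧ reach D av i (av l) ⊆ A) :
    ReachAbsorbs D av i (av w) (A ∪ s.biUnion fun x => reach D av i (av x)) (S ∪ s) {w} := by
  have hmem : ∀ l ∈ S ∪ s ∪ {w}, l ∈ A ∩ D g ∧ av l ≤ av w := by
    intro l hl
    simp only [mem_union, mem_singleton] at hl
    rcases hl with (hl | hl) | rfl
    · exact ⟨(hS l hl).1, (hS l hl).2.1.le⟩
    · exact ⟨(hs l hl).1, (hs l hl).2.le⟩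
    · exact ⟨hw, le_rfl⟩
  refine ⟨fun l hl => ?_, fun l hl => ?_, fun l hl => ?_, fun l hl => by rw [mem_singleton.1 hl]⟩
  · obtain ⟨hlAD, hlw⟩ := hmem l hl
    exact mem_inter.2 ⟨mem_union_left _ (mem_inter.1 hlAD).1,
      hconv l g _ (mem_inter.1 hlAD).2 hlw hwg⟩
  · rcases mem_union.1 hl with hl | hl
    · exact (hS l hl).2.1
    · exact (hs l hl).2
  · rcases mem_union.1 hl with hl | hl
    · exact (hS l hl).2.2.trans subset_union_left
    · exact (subset_biUnion_of_mem (fun x => reach D av i (av x)) hl).trans subset_union_right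

/-- The jumps through `N` are processed by increasing target: when `w` is handled, the labels of
`N` with smaller targets join `S`, and `w` itself plays the role of `E`. -/
lemma card_biUnion_reach_sdiff_le (hconv : IsDownClosed D av)
    {t i g : ℕ} (ih : ReachBoundHolds D av t i) {A S : Finset Λ} (N : Finset Λ)
    (hN : ∀ w ∈ N, w ∈ A ∩ D g ∧ av w ≤ g)
    (hS : ∀ l ∈ S, l ∈ A ∩ D g ∧ (∀ w ∈ N, av l < av w) ∧ reach D av i (av l) ⊆ A) :
    ((N.biUnion fun w => reach D av i (av w)) \ A).card ≤
      ∑ e ∈ range N.card, reachBound t i (S.card + e) 1 := by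
  induction N using Finset.induction_on_max_value av with
  | empty => simp
  | insert w s hws hmax ihs =>
    set A' := A ∪ s.biUnion fun x => reach D av i (av x)
    have hfirst : (reach D av i (av w) \ A').card ≤ reachBound t i (S.card + s.card) 1 := by
      by_cases hdup : ∃ x ∈ s, av x = av w
      · obtain ⟨x, hx, hxw⟩ := hdup
        rw [sdiff_eq_empty_iff_subset.2 (hxw ▸ (subset_biUnion_of_mem
          (fun x => reach D av i (av x)) hx).trans subset_union_right)]
        exact Nat.zero_le _
      push Not at hdup
      have hdisj : Disjoint S s := disjoint_left.2 fun l hl hls =>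
        ((hS l hl).2.1 l (mem_insert_of_mem hls)).false
      rw [← card_union_of_disjoint hdisj]
      refine ih (av w) A' (S ∪ s) {w} (reachAbsorbs_union_of_max hconv
        (hN w (mem_insert_self w s)).1 (hN w (mem_insert_self w s)).2
        (fun x hx => ⟨(hN x (mem_insert_of_mem hx)).1, (hmax x hx).lt_of_ne (hdup x hx)⟩)
        (fun l hl => ⟨(hS l hl).1, (hS l hl).2.1 w (mem_insert_self w s), (hS l hl).2.2⟩))
    have hsplit : ((insert w s).biUnion fun x => reach D av i (av x)) \ A ⊆
        (reach D av i (av w) \ A') ∪ ((s.biUnion fun x => reach D av i (av x)) \ A) := by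
      intro x hx
      simp only [mem_sdiff, mem_union, biUnion_insert, A'] at hx ⊢
      tauto
    have hrest := ihs (fun x hx => hN x (mem_insert_of_mem hx))
      (fun l hl => ⟨(hS l hl).1, fun x hx => (hS l hl).2.1 x (mem_insert_of_mem hx),
        (hS l hl).2.2⟩)
    calc _ ≤ _ := (card_le_card hsplit).trans (card_union_le _ _)
      _ ≤ _ := add_le_add hfirst hrest
      _ = _ := by rw [card_insert_of_notMem hws, sum_range_succ, add_comm]

/-- A jump whose target is not beyond the target of every label of `S` lands inside `A`. -/
lemma ReachAbsorbs.reach_succ_sdiff_subset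
    (hconv : IsDownClosed D av) {i g : ℕ} {A S E : Finset Λ}
    (h : ReachAbsorbs D av (i + 1) g A S E) :
    reach D av (i + 1) g \ A ⊆ (D g \ (S ∪ E)) ∪
      ((((D g).filter fun w => av w < g ∧ ∀ l ∈ S, av l < av w).biUnion
        fun w => reach D av i (av w)) \ (A ∪ D g)) := by
  intro x hx
  obtain ⟨hx, hxA⟩ := mem_sdiff.1 hx
  by_cases hxD : x ∈ D g
  · exact mem_union_left _ (mem_sdiff.2 ⟨hxD, fun h' =>
      hxA (mem_inter.1 (h.union_subset h')).1⟩)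
  obtain ⟨w, hw, hxw⟩ := mem_biUnion.1 ((mem_union.1 hx).resolve_left hxD)
  obtain ⟨hwD, hwg⟩ := mem_filter.1 hw
  by_cases hwS : ∀ l ∈ S, av l < av w
  · exact mem_union_right _ (mem_sdiff.2 ⟨mem_biUnion.2 ⟨w, mem_filter.2 ⟨hwD, hwg, hwS⟩, hxw⟩,
      by simp [hxA, hxD]⟩)
  push Not at hwS
  obtain ⟨l, hl, hwl⟩ := hwS
  exact absurd (h.reach_subset l hl (reach_subset_of_mem
    (hconv w g _ hwD hwl (h.lt_of_mem_left l hl).le) hwl hxw)) hxA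

lemma ReachBoundHolds.succ (hconv : IsDownClosed D av)
    {t i : ℕ} (hcard : ∀ n, (D n).card ≤ t + 1) (ih : ReachBoundHolds D av t i) :
    ReachBoundHolds D av t (i + 1) := by
  intro g A S E h
  set N := (D g).filter fun w => av w < g ∧ ∀ l ∈ S, av l < av w
  have hND : N ⊆ D g \ (S ∪ E) := fun w hw => by
    obtain ⟨hwD, hwg, hwS⟩ := mem_filter.1 hw
    refine mem_sdiff.2 ⟨hwD, fun hwSE => ?_⟩
    rcases mem_union.1 hwSE with hwS' | hwE
    · exact (hwS w hwS').false
    · exact hwg.ne (h.eq_of_mem_right w hwE)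
  have hjumps := card_biUnion_reach_sdiff_le hconv ih (A := A ∪ D g) (S := S) N
    (fun w hw => ⟨mem_inter.2 ⟨mem_union_right _ (mem_filter.1 hw).1, (mem_filter.1 hw).1⟩,
      (mem_filter.1 hw).2.1.le⟩)
    (fun l hl => ⟨inter_subset_inter_right subset_union_left (h.union_subset (mem_union_left _ hl)),
      fun w hw => (mem_filter.1 hw).2.2 l hl,
      (reach_subset_reach_succ i _).trans ((h.reach_subset l hl).trans subset_union_left)⟩)
  have hfree := h.card_sdiff_le (hcard g)
  calc _ ≤ _ := (card_le_card (h.reach_succ_sdiff_subset hconv)).trans (card_union_le _ _)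
    _ ≤ _ := add_le_add hfree hjumps
    _ ≤ reachBound t (i + 1) S.card E.card := Nat.add_le_add_left
      (sum_le_sum_of_subset (range_subset_range.2 ((card_le_card hND).trans hfree))) _

theorem card_reach_le (hconv : IsDownClosed D av) {t : ℕ}
    (hcard : ∀ n, (D n).card ≤ t + 1) (j n : ℕ) :
    (reach D av j n).card ≤ (j + t + 1).choose t := by
  have hj : ReachBoundHolds D av t j := by
    induction j with
    | zero => exact reachBoundHolds_zero hcard
    | succ j ih => exact ih.succ hconv hcard
  have h := hj n ∅ ∅ ∅ ⟨by simp, by simp, by simp, by simp⟩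
  rwa [sdiff_empty, card_empty, reachBound_zero_zero] at h

end Reach

/-! ## Rooted trees -/

lemma SimpleGraph.Preconnected.exists_isPath_support_subset {α : Type*} {G : SimpleGraph α}
    {S : Set α} (hS : (G.induce S).Preconnected) {a b : α} (ha : a ∈ S) (hb : b ∈ S) :
    ∃ p : G.Walk a b, p.IsPath ∧ ∀ u ∈ p.support, u ∈ S := by
  classical
  obtain ⟨w⟩ := hS ⟨a, ha⟩ ⟨b, hb⟩
  refine ⟨(w.map (Embedding.induce S).toHom).bypass, Walk.bypass_isPath _, fun u hu => ?_⟩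
  obtain ⟨u', -, rfl⟩ := List.mem_map.1
    ((Walk.support_map _ w) ▸ Walk.support_bypass_subset_support _ hu)
  exact u'.2

namespace SimpleGraph.IsTree

variable {α : Type*} {T : SimpleGraph α} (hT : T.IsTree) (ρ : α)

noncomputable def rootPath (x : α) : T.Walk ρ x := (hT.existsUnique_path ρ x).choose

noncomputable def depth (x : α) : ℕ := (hT.rootPath ρ x).length

def IsAncestor (y x : α) : Prop := y ∈ (hT.rootPath ρ x).support

def IsTop (S : Set α) (m : α) : Prop := m ∈ S ∧ ∀ z ∈ S, hT.IsAncestor ρ m z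

variable {hT ρ}

lemma isPath_rootPath (x : α) : (hT.rootPath ρ x).IsPath :=
  (hT.existsUnique_path ρ x).choose_spec.1

lemma eq_rootPath {x : α} {p : T.Walk ρ x} (hp : p.IsPath) : p = hT.rootPath ρ x :=
  (hT.existsUnique_path ρ x).choose_spec.2 p hp

lemma rootPath_getVert (x : α) (n : ℕ) :
    hT.rootPath ρ ((hT.rootPath ρ x).getVert n) = (hT.rootPath ρ x).take n :=
  (eq_rootPath ((isPath_rootPath x).take n)).symm

lemma depth_getVert (x : α) (n : ℕ) :
    hT.depth ρ ((hT.rootPath ρ x).getVert n) = min n (hT.depth ρ x) := by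
  rw [depth, rootPath_getVert, Walk.take_length, depth]

lemma isAncestor_getVert (x : α) (n : ℕ) : hT.IsAncestor ρ ((hT.rootPath ρ x).getVert n) x :=
  Walk.getVert_mem_support _ n

lemma IsAncestor.getVert_depth {x y : α} (h : hT.IsAncestor ρ y x) :
    (hT.rootPath ρ x).getVert (hT.depth ρ y) = y := by
  classical
  have h' : y ∈ (hT.rootPath ρ x).support := h
  rw [depth, ← eq_rootPath ((isPath_rootPath x).takeUntil h'), Walk.getVert_length_takeUntil h']

lemma IsAncestor.refl (x : α) : hT.IsAncestor ρ x x := Walk.end_mem_support _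

lemma IsAncestor.depth_le {x y : α} (h : hT.IsAncestor ρ y x) : hT.depth ρ y ≤ hT.depth ρ x := by
  have := depth_getVert (hT := hT) (ρ := ρ) x (hT.depth ρ y)
  rw [h.getVert_depth] at this
  omega

lemma isAncestor_getVert_getVert (x : α) {m n : ℕ} (hmn : m ≤ n) :
    hT.IsAncestor ρ ((hT.rootPath ρ x).getVert m) ((hT.rootPath ρ x).getVert n) := by
  rw [IsAncestor, rootPath_getVert, ← min_eq_right hmn, ← Walk.take_getVert]
  exact Walk.getVert_mem_support _ _

lemma IsAncestor.of_depth_le {x y z : α} (hy : hT.IsAncestor ρ y x) (hz : hT.IsAncestor ρ z x)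
    (h : hT.depth ρ y ≤ hT.depth ρ z) : hT.IsAncestor ρ y z := by
  rw [← hy.getVert_depth, ← hz.getVert_depth]
  exact isAncestor_getVert_getVert x h

lemma IsAncestor.total {x y z : α} (hy : hT.IsAncestor ρ y x) (hz : hT.IsAncestor ρ z x) :
    hT.IsAncestor ρ y z ∨ hT.IsAncestor ρ z y :=
  (le_total (hT.depth ρ y) (hT.depth ρ z)).imp (hy.of_depth_le hz) (hz.of_depth_le hy)

lemma IsAncestor.trans {x y z : α} (hyx : hT.IsAncestor ρ y x) (hxz : hT.IsAncestor ρ x z) :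
    hT.IsAncestor ρ y z := by
  have h : (hT.rootPath ρ x).getVert (hT.depth ρ y) =
      (hT.rootPath ρ z).getVert (min (hT.depth ρ x) (hT.depth ρ y)) := by
    rw [← Walk.take_getVert, ← rootPath_getVert, hxz.getVert_depth]
  rw [← hyx.getVert_depth, h]
  exact isAncestor_getVert z _

lemma IsAncestor.eq_of_depth_le {x y : α} (h : hT.IsAncestor ρ y x)
    (hd : hT.depth ρ x ≤ hT.depth ρ y) : y = x := by
  rw [← h.getVert_depth, le_antisymm h.depth_le hd]
  exact Walk.getVert_length _

lemma IsAncestor.antisymm {x y : α} (hyx : hT.IsAncestor ρ y x) (hxy : hT.IsAncestor ρ x y) :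
    y = x :=
  hyx.eq_of_depth_le hxy.depth_le

variable (hT ρ) in
lemma exists_isTop {S : Set α} (hS : (T.induce S).Connected) : ∃ m, hT.IsTop ρ S m := by
  classical
  obtain ⟨⟨a, ha⟩⟩ := hS.nonempty
  obtain ⟨m, hmS, hmin⟩ : ∃ m ∈ S, ∀ z ∈ S, hT.depth ρ m ≤ hT.depth ρ z :=
    ⟨_, Function.argminOn_mem _ S ⟨a, ha⟩, fun z hz => Function.argminOn_le _ S hz⟩
  refine ⟨m, hmS, fun z hz => ?_⟩
  obtain ⟨Q, hQ, hQS⟩ := hS.preconnected.exists_isPath_support_subset hmS hz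
  -- the root path of `m` followed by `Q` is a path: a vertex of `Q` above `m` would be shallower
  have hP : ((hT.rootPath ρ m).append Q).IsPath := by
    rw [Walk.isPath_def, Walk.support_append, List.nodup_append]
    refine ⟨(isPath_rootPath m).support_nodup, hQ.support_nodup.sublist (List.tail_sublist _),
      fun u hu u' hu' huu' => ?_⟩
    subst huu'
    have hum : u = m := IsAncestor.eq_of_depth_le hu (hmin u (hQS u (List.mem_of_mem_tail hu')))
    subst hum
    have := hQ.support_nodup
    rw [← Walk.cons_tail_support] at this
    exact (List.nodup_cons.1 this).1 hu'
  rw [IsAncestor, ← eq_rootPath hP, Walk.mem_support_append_iff]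
  exact Or.inl (Walk.end_mem_support _)

lemma mem_of_isAncestor_of_isAncestor {S : Set α} (hS : (T.induce S).Connected) {x y z : α}
    (hxy : hT.IsAncestor ρ x y) (hyz : hT.IsAncestor ρ y z) (hx : x ∈ S) (hz : z ∈ S) : y ∈ S := by
  classical
  obtain ⟨Q, hQ, hQS⟩ := hS.preconnected.exists_isPath_support_subset hx hz
  have hxz : x ∈ (hT.rootPath ρ z).support := hxy.trans hyz
  have hdrop : (hT.rootPath ρ z).dropUntil x hxz = Q := congrArg Subtype.val
    ((hT.isAcyclic.subsingleton_path x z).elim ⟨_, (isPath_rootPath z).dropUntil hxz⟩ ⟨Q, hQ⟩)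
  have hy : y ∈ (hT.rootPath ρ z).support := hyz
  rw [← Walk.take_spec _ hxz, Walk.mem_support_append_iff, hdrop,
    eq_rootPath (hT := hT) ((isPath_rootPath z).takeUntil hxz)] at hy
  rcases hy with hy | hy
  · exact (IsAncestor.antisymm hy hxy) ▸ hx
  · exact hQS y hy

end SimpleGraph.IsTree

/-! ## Weak homomorphisms and shallow minor models -/

def IsWeakHom {α β : Type*} (G : SimpleGraph α) (G' : SimpleGraph β) (f : α → β) : Prop :=
  ∀ ⦃a b⦄, G.Adj a b → f a = f b ∨ G'.Adj (f a) (f b)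

namespace IsWeakHom

section

variable {α β γ : Type*} {G : SimpleGraph α} {G' : SimpleGraph β} {G'' : SimpleGraph γ}

lemma of_hom (φ : G →g G') : IsWeakHom G G' φ := fun _ _ h => Or.inr (φ.map_adj h)

lemma comp {f : α → β} {g : β → γ} (hg : IsWeakHom G' G'' g) (hf : IsWeakHom G G' f) :
    IsWeakHom G G'' (g ∘ f) := fun a b h => by
  rcases hf h with h' | h'
  · exact Or.inl (congrArg g h')
  · exact hg h'

lemma toCompleteGraph (f : α → β) : IsWeakHom G (completeGraph β) f := fun _ _ _ => eq_or_ne _ _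

lemma toMap (f : α → β) : IsWeakHom G (G.map f) f := fun a b h =>
  (eq_or_ne (f a) (f b)).imp_right (map_adj_apply' h)

lemma exists_walk {f : α → β} (hf : IsWeakHom G G' f) {a b : α} (p : G.Walk a b) :
    ∃ q : G'.Walk (f a) (f b), q.length ≤ p.length ∧ ∀ y ∈ q.support, ∃ x ∈ p.support, f x = y := by
  induction p with
  | nil =>
    refine ⟨Walk.nil, le_rfl, fun y hy => ?_⟩
    rw [Walk.support_nil, List.mem_singleton] at hy
    exact ⟨_, Walk.start_mem_support _, hy.symm⟩
  | cons h p ih =>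
    obtain ⟨q, hq, hqs⟩ := ih
    have hqs' : ∀ y ∈ q.support, ∃ x ∈ (Walk.cons h p).support, f x = y := fun y hy => by
      obtain ⟨x, hx, rfl⟩ := hqs y hy
      exact ⟨x, List.mem_cons_of_mem _ hx, rfl⟩
    rcases hf h with h' | h'
    · refine ⟨q.copy h'.symm rfl, by simp; omega, fun y hy => hqs' y (by simpa using hy)⟩
    · refine ⟨Walk.cons h' q, by simp; omega, fun y hy => ?_⟩
      rcases List.mem_cons.1 hy with rfl | hy
      · exact ⟨_, Walk.start_mem_support _, rfl⟩
      · exact hqs' y hy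

lemma exists_walk_of_dist_le {f : α → β} (hf : IsWeakHom G G' f) {S : Set α}
    (hS : (G.induce S).Connected) {c p : S} {r : ℕ} (h : (G.induce S).dist c p ≤ r) :
    ∃ q : G'.Walk (f c) (f p), q.length ≤ r ∧ ∀ y ∈ q.support, y ∈ f '' S := by
  obtain ⟨w, hw⟩ := (hS.preconnected c p).exists_walk_length_eq_dist
  obtain ⟨q, hq, hqs⟩ := (hf.comp (of_hom (Embedding.induce S).toHom)).exists_walk w
  refine ⟨q, hq.trans (hw ▸ h), fun y hy => ?_⟩
  obtain ⟨x, -, hx⟩ := hqs y hy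
  exact ⟨x, x.2, hx⟩

end

section StrongProduct

variable {α β γ : Type} {G : SimpleGraph γ} {A : SimpleGraph α} {B : SimpleGraph β}

lemma fst (A : SimpleGraph α) (B : SimpleGraph β) : IsWeakHom (A ⊠ B) A Prod.fst :=
  fun _ _ h => h.2.1

lemma snd (A : SimpleGraph α) (B : SimpleGraph β) : IsWeakHom (A ⊠ B) B Prod.snd :=
  fun _ _ h => h.2.2

lemma prod {f : γ → α} {g : γ → β} (hf : IsWeakHom G A f) (hg : IsWeakHom G B g) :
    IsWeakHom G (A ⊠ B) fun v => (f v, g v) := fun a b h =>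
  (eq_or_ne (f a, g a) (f b, g b)).imp_right fun hne => ⟨hne, hf h, hg h⟩

lemma contains {f : γ → α} (hf : IsWeakHom G A f) (hinj : Function.Injective f) : Contains G A :=
  ⟨f, hinj, fun _ _ h => (hf h).resolve_left (hinj.ne h.ne)⟩

end StrongProduct

end IsWeakHom

namespace IsShallowMinorModel

variable {α β : Type} {G : SimpleGraph α} {X : SimpleGraph β} {r : ℕ} {μ : α → Set β}

lemma eq_of_mem (hμ : IsShallowMinorModel G X r μ) {u v : α} {p : β} (hu : p ∈ μ u)
    (hv : p ∈ μ v) : u = v := by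
  by_contra hne
  exact Set.disjoint_left.1 (hμ.2.2.1 hne) hu hv

lemma exists_walk_le_two_mul {γ : Type} {A : SimpleGraph γ} {f : β → γ}
    (hμ : IsShallowMinorModel G X r μ) (hf : IsWeakHom X A f) (v : α) {p q : β} (hp : p ∈ μ v)
    (hq : q ∈ μ v) :
    ∃ w : A.Walk (f p) (f q), w.length ≤ 2 * r ∧ ∀ y ∈ w.support, y ∈ f '' μ v := by
  obtain ⟨c, hc⟩ := hμ.2.1 v
  obtain ⟨wp, hwp, hwps⟩ := hf.exists_walk_of_dist_le (hμ.1 v) (hc ⟨p, hp⟩)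
  obtain ⟨wq, hwq, hwqs⟩ := hf.exists_walk_of_dist_le (hμ.1 v) (hc ⟨q, hq⟩)
  refine ⟨wp.reverse.append wq, by simp; omega, fun y hy => ?_⟩
  rcases (Walk.mem_support_append_iff _ _).1 hy with hy | hy
  · exact hwps y (by simpa using hy)
  · exact hwqs y hy

end IsShallowMinorModel

/-! ## Tree decompositions -/

theorem isTreeDecomp_map {V σ ιT : Type} {G : SimpleGraph V} {T : SimpleGraph ιT} (hT : T.IsTree)
    {f : V → σ} (hf : Function.Surjective f) {S : V → Set ιT}
    (hS : ∀ v, (T.induce (S v)).Connected) (hadj : ∀ ⦃u v⦄, G.Adj u v → (S u ∩ S v).Nonempty)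
    (hfib : ∀ ⦃u v⦄, f u = f v → (S u ∩ S v).Nonempty) :
    IsTreeDecomp (G.map f) T fun x => f '' {v | x ∈ S v} := by
  refine ⟨hT, ?_, fun a => ?_⟩
  · rintro _ _ ⟨-, u, v, huv, rfl, rfl⟩
    obtain ⟨x, hxu, hxv⟩ := hadj huv
    exact ⟨x, ⟨u, hxu, rfl⟩, ⟨v, hxv, rfl⟩⟩
  · have hfiber : {x | a ∈ f '' {v | x ∈ S v}} = ⋃₀ (S '' {v | f v = a}) := by
      ext x
      simp [and_comm]
    rw [hfiber]
    obtain ⟨v, rfl⟩ := hf a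
    refine induce_sUnion_connected_of_pairwise_not_disjoint ⟨S v, v, rfl, rfl⟩ ?_ ?_
    · rintro _ _ ⟨u, hu, rfl⟩ ⟨w, hw, rfl⟩
      exact hfib (hu.trans hw.symm)
    · rintro _ ⟨u, -, rfl⟩
      exact hS u

namespace IsTreeDecomp

open SimpleGraph.IsTree

variable {ι ιT : Type} {H : SimpleGraph ι} {T : SimpleGraph ιT} {W : ιT → Set ι}
  {hT : T.IsTree} {ρ : ιT} {tp : ι → ιT}

lemma exists_mem_bag (hW : IsTreeDecomp H T W) {a b : ι} (h : a = b ∨ H.Adj a b) :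
    ∃ x, a ∈ W x ∧ b ∈ W x := by
  rcases h with rfl | h
  · obtain ⟨⟨x, hx⟩⟩ := (hW.2.2 a).nonempty
    exact ⟨x, hx, hx⟩
  · exact hW.2.1 h

lemma connected_induce_setOf_inter_nonempty (hW : IsTreeDecomp H T W) {U : Set ι} (hU : U.Nonempty)
    (hwalk : ∀ a ∈ U, ∀ b ∈ U, ∃ q : H.Walk a b, ∀ u ∈ q.support, u ∈ U) :
    (T.induce {x | (U ∩ W x).Nonempty}).Connected := by
  set N := {x | (U ∩ W x).Nonempty}
  have hlift : ∀ {a : ι} (ha : a ∈ U) {y z : ιT} (hy : a ∈ W y) (hz : a ∈ W z),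
      (T.induce N).Reachable (⟨y, a, ha, hy⟩ : N) (⟨z, a, ha, hz⟩ : N) := fun {a} ha y z hy hz =>
    ((hW.2.2 a).preconnected ⟨y, hy⟩ ⟨z, hz⟩).map
      (T.induceHomOfLE (show {x | a ∈ W x} ⊆ N from fun x hx => ⟨a, ha, hx⟩)).toHom
  have hreach : ∀ {a b : ι} (q : H.Walk a b) (hq : ∀ u ∈ q.support, u ∈ U) {y z : ιT}
      (hy : a ∈ W y) (hz : b ∈ W z),
      (T.induce N).Reachable (⟨y, a, hq a q.start_mem_support, hy⟩ : N)
        (⟨z, b, hq b q.end_mem_support, hz⟩ : N) := by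
    intro a b q
    induction q with
    | nil => exact fun hq y z hy hz => hlift (hq _ (List.mem_singleton_self _)) hy hz
    | cons h q ih =>
      intro hq y z hy hz
      obtain ⟨n, han, hbn⟩ := hW.2.1 h
      exact (hlift (hq _ (Walk.start_mem_support _)) hy han).trans
        (ih (fun u hu => hq u (List.mem_cons_of_mem _ hu)) hbn hz)
  obtain ⟨a, ha⟩ := hU
  obtain ⟨⟨y₀, hy₀⟩⟩ := (hW.2.2 a).nonempty
  refine (connected_iff _).2 ⟨fun ⟨y, b, hb, hby⟩ ⟨z, c, hc, hcz⟩ => ?_, ⟨⟨y₀, a, ha, hy₀⟩⟩⟩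
  obtain ⟨q, hq⟩ := hwalk b hb c hc
  exact hreach q hq hby hcz

lemma mem_of_isAncestor (hW : IsTreeDecomp H T W) {u : ι} {x y z : ιT}
    (hxy : hT.IsAncestor ρ x y) (hyz : hT.IsAncestor ρ y z) (hx : u ∈ W x) (hz : u ∈ W z) :
    u ∈ W y :=
  mem_of_isAncestor_of_isAncestor (hW.2.2 u) hxy hyz hx hz

lemma isAncestor_top_or_mem (hW : IsTreeDecomp H T W)
    (htp : ∀ u, hT.IsTop ρ {y | u ∈ W y} (tp u))
    {u : ι} {y z : ιT} (hzy : hT.IsAncestor ρ z y) (hu : u ∈ W y) :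
    hT.IsAncestor ρ z (tp u) ∨ (hT.IsAncestor ρ (tp u) z ∧ u ∈ W z) :=
  (hzy.total ((htp u).2 y hu)).imp_right fun h => ⟨h, hW.mem_of_isAncestor h hzy (htp u).1 hu⟩

variable (hT ρ) in
/-- The bag of the ancestor of `x` at depth `n`, or of `x` itself when `n` exceeds its depth. -/
noncomputable def pathBags (hfin : ∀ y, (W y).Finite) (x : ιT) (n : ℕ) : Finset ι :=
  (hfin ((hT.rootPath ρ x).getVert n)).toFinset

lemma mem_pathBags {hfin : ∀ y, (W y).Finite} {x z : ιT} {u : ι} (hzx : hT.IsAncestor ρ z x)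
    (hu : u ∈ W z) : u ∈ pathBags hT ρ hfin x (hT.depth ρ z) := by
  rwa [pathBags, Set.Finite.mem_toFinset, hzx.getVert_depth]

lemma isDownClosed_pathBags (hW : IsTreeDecomp H T W)
    (htp : ∀ u, hT.IsTop ρ {y | u ∈ W y} (tp u)) (hfin : ∀ y, (W y).Finite) (x : ιT) :
    IsDownClosed (pathBags hT ρ hfin x) fun u => hT.depth ρ (tp u) := by
  intro u n m hu hm hmn
  rw [pathBags, Set.Finite.mem_toFinset] at hu ⊢
  have htopx := ((htp u).2 _ hu).trans (isAncestor_getVert x n)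
  refine hW.mem_of_isAncestor (htopx.of_depth_le (isAncestor_getVert x m) ?_)
    (isAncestor_getVert_getVert x hmn) (htp u).1 hu
  rw [depth_getVert]
  exact le_min hm htopx.depth_le

/-- Following an edge `w w₁` of the walk costs at most one jump: to the top of `w` when that top
lies above the current node `z`, and none otherwise. -/
lemma mem_reach_of_walk [DecidableEq ι] (hW : IsTreeDecomp H T W)
    (htp : ∀ u, hT.IsTop ρ {y | u ∈ W y} (tp u))
    (hfin : ∀ y, (W y).Finite) {x : ιT} {w a : ι} (q : H.Walk w a)
    (hq : ∀ u ∈ q.support, hT.IsAncestor ρ (tp a) (tp u)) {y z : ιT}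
    (hzx : hT.IsAncestor ρ z x) (haz : hT.IsAncestor ρ (tp a) z)
    (hzy : hT.IsAncestor ρ z y) (hwy : w ∈ W y) :
    a ∈ reach (pathBags hT ρ hfin x) (fun u => hT.depth ρ (tp u)) q.length (hT.depth ρ z) := by
  induction q generalizing y z with
  | nil => exact subset_reach 0 _ (mem_pathBags hzx (hW.mem_of_isAncestor haz hzy (htp _).1 hwy))
  | cons h q ih =>
    obtain ⟨n, hwn, hw₁n⟩ := hW.2.1 h
    have hq' : ∀ u ∈ q.support, hT.IsAncestor ρ (tp _) (tp u) :=
      fun u hu => hq u (List.mem_cons_of_mem _ hu)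
    rcases hW.isAncestor_top_or_mem htp hzy hwy with hzt | ⟨htz, hwz⟩
    · exact reach_subset_reach_succ _ _ (ih hq' hzx haz (hzt.trans ((htp _).2 n hwn)) hw₁n)
    · exact reach_subset_of_mem (mem_pathBags hzx hwz) htz.depth_le
        (ih hq' (htz.trans hzx) (hq _ (Walk.start_mem_support _)) ((htp _).2 n hwn) hw₁n)

lemma ncard_image_le_choose (hW : IsTreeDecomp H T W) (ρ : ιT) {t s : ℕ}
    (hbags : ∀ y, (W y).Finite ∧ (W y).ncard ≤ t + 1) {V : Type} {U : V → Set ι} {a : V → ι}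
    {m : V → ιT}
    (hwalk : ∀ v, ∀ u ∈ U v, ∃ q : H.Walk u (a v), q.length ≤ s ∧ ∀ u' ∈ q.support, u' ∈ U v)
    (ha : ∀ v, a v ∈ W (m v)) (hm : ∀ v y, (U v ∩ W y).Nonempty → hW.1.IsAncestor ρ (m v) y)
    (x : ιT) :
    (a '' {v | (U v ∩ W x).Nonempty}).Finite ∧
      (a '' {v | (U v ∩ W x).Nonempty}).ncard ≤ (s + t + 1).choose t := by
  classical
  choose tp htp using fun u => hW.1.exists_isTop ρ (hW.2.2 u)
  have hfin y := (hbags y).1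
  set R := reach (pathBags hW.1 ρ hfin x) (fun u => hW.1.depth ρ (tp u)) s (hW.1.depth ρ x)
  have hsub : a '' {v | (U v ∩ W x).Nonempty} ⊆ R := by
    rintro _ ⟨v, ⟨u, huU, hux⟩, rfl⟩
    obtain ⟨q, hqs, hqU⟩ := hwalk v u huU
    have hmv := (htp (a v)).2 _ (ha v)
    exact reach_mono hqs _ (hW.mem_reach_of_walk htp hfin q
      (fun u' hu' => hmv.trans (hm v _ ⟨u', hqU u' hu', (htp u').1⟩)) (IsAncestor.refl x)
      (hmv.trans (hm v x ⟨u, huU, hux⟩)) (IsAncestor.refl x) hux)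
  have hcard : R.card ≤ (s + t + 1).choose t := card_reach_le
    (hW.isDownClosed_pathBags htp hfin x) (fun n => by
      rw [pathBags, ← Set.ncard_eq_toFinset_card _ (hfin _)]
      exact (hbags _).2) s _
  exact ⟨R.finite_toSet.subset hsub,
    (Set.ncard_le_ncard hsub R.finite_toSet).trans (by rwa [Set.ncard_coe_finset])⟩

end IsTreeDecomp

theorem exists_treewidthLE_map {V β ι : Type} {G : SimpleGraph V} {X : SimpleGraph β}
    {H : SimpleGraph ι} {f : β → ι} (hf : IsWeakHom X H f) {r t : ℕ} {μ : V → Set β}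
    (hμ : IsShallowMinorModel G X r μ) (htw : TreewidthLE H t) :
    ∃ rep : V → β, (∀ v, rep v ∈ μ v) ∧
      TreewidthLE (G.map (Set.rangeFactorization (f ∘ rep))) ((2 * r + 1 + t).choose t - 1) := by
  obtain ⟨ιT, T, W, hW, hbags⟩ := htw
  obtain ⟨ρ⟩ := hW.1.connected.nonempty
  have hwalk : ∀ v, ∀ u ∈ f '' μ v, ∀ u' ∈ f '' μ v,
      ∃ q : H.Walk u u', q.length ≤ 2 * r ∧ ∀ y ∈ q.support, y ∈ f '' μ v := by
    rintro v _ ⟨p, hp, rfl⟩ _ ⟨p', hp', rfl⟩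
    exact hμ.exists_walk_le_two_mul hf v hp hp'
  have hS v : (T.induce {x | (f '' μ v ∩ W x).Nonempty}).Connected :=
    hW.connected_induce_setOf_inter_nonempty ((Set.nonempty_coe_sort.1 (hμ.1 v).nonempty).image f)
      fun u hu u' hu' => (hwalk v u hu u' hu').imp fun _ hq => hq.2
  choose m hm using fun v => hW.1.exists_isTop ρ (hS v)
  have hrep_ex v : ∃ p ∈ μ v, f p ∈ W (m v) := by
    obtain ⟨_, ⟨p, hp, rfl⟩, hpW⟩ := (hm v).1
    exact ⟨p, hp, hpW⟩
  choose rep hrep hrepW using hrep_ex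
  refine ⟨rep, hrep, ιT, T, _, isTreeDecomp_map hW.1 Set.rangeFactorization_surjective hS ?_ ?_,
    fun x => ?_⟩
  · intro u v huv
    obtain ⟨p, hp, q, hq, hpq⟩ := hμ.2.2.2 huv
    obtain ⟨x, hpx, hqx⟩ := hW.exists_mem_bag (hf hpq)
    exact ⟨x, ⟨f p, ⟨p, hp, rfl⟩, hpx⟩, ⟨f q, ⟨q, hq, rfl⟩, hqx⟩⟩
  · intro u v huv
    have huv' : f (rep u) = f (rep v) := congrArg Subtype.val huv
    exact ⟨m u, (hm u).1, f (rep v), ⟨rep v, hrep v, rfl⟩, huv' ▸ hrepW u⟩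
  · have hbag := hW.ncard_image_le_choose ρ hbags (a := f ∘ rep)
      (fun v u hu => hwalk v u hu _ ⟨rep v, hrep v, rfl⟩) hrepW (fun v => (hm v).2) x
    refine ⟨Set.Finite.of_finite_image (by rw [Set.image_image]; exact hbag.1)
      Subtype.val_injective.injOn, ?_⟩
    rw [← Set.ncard_image_of_injective _ Subtype.val_injective, Set.image_image,
      Nat.sub_add_cancel (Nat.choose_pos (by omega)), Nat.add_right_comm]
    exact hbag.2

/-! ## The product structure -/

lemma MaxDegLE.exists_injOn {α : Type} {G : SimpleGraph α} {d : ℕ} (h : MaxDegLE G d) (y : α) :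
    ∃ φ : α → Fin (d + 1), Set.InjOn φ (insert y (G.neighborSet y)) := by
  have hfin := (h y).1.insert y
  have hle : (insert y (G.neighborSet y)).encard ≤ (Set.univ : Set (Fin (d + 1))).encard := by
    rw [Set.encard_univ, ENat.card_eq_coe_fintype_card, Fintype.card_fin]
    exact Set.encard_le_coe_iff_finite_ncard_le.2
      ⟨hfin, (Set.ncard_insert_le _ _).trans (Nat.add_le_add_right (h y).2 1)⟩
  obtain ⟨φ, -, hφ⟩ := hfin.exists_injOn_of_encard_le hle
  exact ⟨φ, hφ⟩

lemma eq_or_powG_adj_of_walk {α : Type} {L : SimpleGraph α} {a b : α} {s : ℕ} (p : L.Walk a b)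
    (hp : p.length ≤ s) : a = b ∨ (powG L s).Adj a b :=
  (eq_or_ne a b).imp_right fun hne => ⟨hne, p, hp⟩

theorem IsShallowMinorModel.contains_strongProd {V ι κ : Type} {G : SimpleGraph V}
    {H : SimpleGraph ι} {L : SimpleGraph κ} {r k ℓ : ℕ} {μ : V → Set ((ι × κ) × Fin ℓ)}
    (hμ : IsShallowMinorModel G (H ⊠ L ⊠ completeGraph (Fin ℓ)) r μ)
    (hdeg : MaxDegLE (powG L r) k) {rep : V → (ι × κ) × Fin ℓ} (hrep : ∀ v, rep v ∈ μ v) :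
    Contains G (G.map (Set.rangeFactorization fun v => (rep v).1.1) ⊠ powG L (2 * r + 1) ⊠
      completeGraph (Fin (ℓ * (k + 1)))) := by
  have hg : IsWeakHom (H ⊠ L ⊠ completeGraph (Fin ℓ)) L fun p => p.1.2 :=
    (IsWeakHom.snd H L).comp (IsWeakHom.fst _ _)
  choose c hc using hμ.2.1
  set y : V → κ := fun v => (c v : (ι × κ) × Fin ℓ).1.2
  have hcenter v p (hp : p ∈ μ v) : ∃ w : L.Walk (y v) p.1.2, w.length ≤ r :=
    (hg.exists_walk_of_dist_le (hμ.1 v) (hc v ⟨p, hp⟩)).imp fun _ hw => hw.1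
  have hball v p (hp : p ∈ μ v) : p.1.2 ∈ insert (y v) ((powG L r).neighborSet (y v)) := by
    obtain ⟨w, hw⟩ := hcenter v p hp
    exact (eq_or_powG_adj_of_walk w hw).imp Eq.symm id
  have hL : IsWeakHom G (powG L (2 * r + 1)) y := by
    intro u v huv
    obtain ⟨p, hp, q, hq, hpq⟩ := hμ.2.2.2 huv
    obtain ⟨wp, hwp⟩ := hcenter u p hp
    obtain ⟨wq, hwq⟩ := hcenter v q hq
    rcases hg hpq with heq | hadj
    · exact eq_or_powG_adj_of_walk (wp.append (wq.reverse.copy heq.symm rfl)) (by simp; omega)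
    · exact eq_or_powG_adj_of_walk (wp.append (Walk.cons hadj wq.reverse)) (by simp; omega)
  choose φ hφ using hdeg.exists_injOn
  refine (((IsWeakHom.toMap _).prod hL).prod (IsWeakHom.toCompleteGraph
    fun v => finProdFinEquiv ((rep v).2, φ (y v) (rep v).1.2))).contains fun u v huv => ?_
  simp only [Prod.mk.injEq, EmbeddingLike.apply_eq_iff_eq] at huv
  obtain ⟨⟨hH, hy⟩, hK, hφuv⟩ := huv
  have hL' : (rep u).1.2 = (rep v).1.2 := hφ (y u) (hball u _ (hrep u))
    (by rw [hy]; exact hball v _ (hrep v)) (by rw [hφuv, hy])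
  have hrep_eq : rep u = rep v := Prod.ext (Prod.ext (congrArg Subtype.val hH) hL') hK
  exact hμ.eq_of_mem (hrep u) (hrep_eq ▸ hrep v)

/-- If `G` is an `r`-shallow minor of `H ⊠ L ⊠ K_ℓ` where `H` has treewidth at most `t`
and `Δ(L^r) ≤ k`, then `G` is contained in `J ⊠ L^{2r+1} ⊠ K_{ℓ(k+1)}` for some graph `J`
of treewidth at most `C(2r+1+t, t) − 1`. -/
theorem main_shallow_product_structure {V ι κ : Type} (G : SimpleGraph V)
    (H : SimpleGraph ι) (L : SimpleGraph κ) (r t k ℓ : ℕ)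
    (htw : TreewidthLE H t) (hdeg : MaxDegLE (powG L r) k)
    (hm : ShallowMinor G (H ⊠ L ⊠ (completeGraph (Fin ℓ))) r) :
    ∃ (σ : Type) (J : SimpleGraph σ),
      TreewidthLE J (Nat.choose (2 * r + 1 + t) t - 1) ∧
      Contains G (J ⊠ (powG L (2 * r + 1)) ⊠ (completeGraph (Fin (ℓ * (k + 1))))) := by
  obtain ⟨μ, hμ⟩ := hm
  obtain ⟨rep, hrep, hJ⟩ :=
    exists_treewidthLE_map ((IsWeakHom.fst H L).comp (IsWeakHom.fst _ _)) hμ htw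
  exact ⟨_, _, hJ, hμ.contains_strongProd hdeg hrep⟩
end

section
/- For every graph G, every r-shallow minor H of G, and every integer s ≥ 1, the s-strong colouring number satisfies scol_s(H) ≤ scol_{2rs+2r+s}(G). -/
open SimpleGraph

variable {V W : Type}

infixl:70 " ⊠ " => strongProd

open SimpleGraph
variable {V W : Type}

/-- `R(G,⪯,v,s)`: vertices `w ⪯ v` reachable from `v` by a path of length at most `s`
whose internal vertices are all `≻ v`. -/
def RSet (G : SimpleGraph V) (le : V → V → Prop) (v : V) (s : ℕ) : Set V :=
  {w | le w v ∧ ∃ p : G.Walk v w, p.length ≤ s ∧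
    ∀ u ∈ p.support, u ≠ v → u ≠ w → (le v u ∧ u ≠ v)}

/-- `Q(G,⪯,v,s)`: vertices `w ⪯ v` reachable from `v` by a path of length at most `s`
whose internal vertices are all `≻ w`. -/
def QSet (G : SimpleGraph V) (le : V → V → Prop) (v : V) (s : ℕ) : Set V :=
  {w | le w v ∧ ∃ p : G.Walk v w, p.length ≤ s ∧
    ∀ u ∈ p.support, u ≠ v → u ≠ w → (le w u ∧ u ≠ w)}

/-- The `s`-strong colouring number of `G` is at most `c`. -/
def ScolLE (G : SimpleGraph V) (s : ℕ) (c : ℕ) : Prop :=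
  ∃ le : V → V → Prop, IsLinearOrder V le ∧
    ∀ v, (RSet G le v s).Finite ∧ (RSet G le v s).ncard ≤ c

/-- The `s`-weak colouring number of `G` is at most `c`. -/
def WcolLE (G : SimpleGraph V) (s : ℕ) (c : ℕ) : Prop :=
  ∃ le : V → V → Prop, IsLinearOrder V le ∧
    ∀ v, (QSet G le v s).Finite ∧ (QSet G le v s).ncard ≤ c

/-- The queue-number of `G` is at most `q`: there is a linear order of `V(G)` and an
assignment of edges to `q` queues such that no two edges in the same queue nest. -/
def QueueLE (G : SimpleGraph V) (q : ℕ) : Prop :=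
  ∃ le : V → V → Prop, IsLinearOrder V le ∧
    ∃ σ : V → V → ℕ,
      (∀ u v, σ u v = σ v u) ∧
      (∀ ⦃u v⦄, G.Adj u v → σ u v < q) ∧
      (∀ a b c d, G.Adj a b → G.Adj c d → σ a b = σ c d →
        (le a b ∧ a ≠ b) → (le c d ∧ c ≠ d) →
        ¬((le a c ∧ a ≠ c) ∧ (le d b ∧ d ≠ b)))

/-- A `(k,d)`-shortcut system for `G`: a set of paths of length at most `k` such that
every vertex is an internal vertex of at most `d` of the paths. -/
structure ShortcutSystem (G : SimpleGraph V) (k d : ℕ) where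
  paths : Set ((u : V) × (v : V) × G.Walk u v)
  isPath : ∀ p ∈ paths, p.2.2.IsPath
  lengthLE : ∀ p ∈ paths, p.2.2.length ≤ k
  internal : ∀ w : V,
    {p ∈ paths | w ∈ p.2.2.support ∧ w ≠ p.1 ∧ w ≠ p.2.1}.Finite ∧
    {p ∈ paths | w ∈ p.2.2.support ∧ w ≠ p.1 ∧ w ≠ p.2.1}.ncard ≤ d

/-- The supergraph `G^𝒫` of `G` obtained by adding an edge `uv` whenever `𝒫`
contains a `(u,v)`-path. -/
def shortcutGraph (G : SimpleGraph V) {k d : ℕ} (P : ShortcutSystem G k d) : SimpleGraph V where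
  Adj u v := u ≠ v ∧ (G.Adj u v ∨ ∃ p ∈ P.paths, (p.1 = u ∧ p.2.1 = v) ∨ (p.1 = v ∧ p.2.1 = u))
  symm := by
    constructor
    rintro u v ⟨h, h'⟩
    refine ⟨h.symm, ?_⟩
    rcases h' with h' | ⟨p, hp, h'⟩
    · exact Or.inl h'.symm
    · exact Or.inr ⟨p, hp, by tauto⟩
  loopless := ⟨fun v h => h.1 rfl⟩

/-- A `d`-clique lift of `G`: a choice `M v ⊆ N(v)` with `|M v| ≤ d` for each vertex `v`. -/
structure CliqueLift (G : SimpleGraph V) (d : ℕ) where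
  M : V → Set V
  subset_nbhd : ∀ v, M v ⊆ G.neighborSet v
  finite : ∀ v, (M v).Finite
  card_le : ∀ v, (M v).ncard ≤ d

/-- The graph `G^ℳ` obtained from `G` by adding the edge `uw` whenever there is a vertex `v`
with `u ∈ M v` and `w ∈ N(v)`. -/
def cliqueLiftGraph (G : SimpleGraph V) {d : ℕ} (ℳ : CliqueLift G d) : SimpleGraph V where
  Adj u w := u ≠ w ∧ (G.Adj u w ∨ ∃ v, (u ∈ ℳ.M v ∧ w ∈ G.neighborSet v) ∨
    (w ∈ ℳ.M v ∧ u ∈ G.neighborSet v))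
  symm := by
    constructor
    rintro u w ⟨h, h'⟩
    refine ⟨h.symm, ?_⟩
    rcases h' with h' | ⟨v, h'⟩
    · exact Or.inl h'.symm
    · exact Or.inr ⟨v, by tauto⟩
  loopless := ⟨fun v h => h.1 rfl⟩

/-- The `m × m` grid graph. -/
def gridGraph (m : ℕ) : SimpleGraph (Fin m × Fin m) where
  Adj a b := |(a.1 : ℤ) - b.1| + |(a.2 : ℤ) - b.2| = 1
  symm := by
    constructor
    intro a b h
    rw [abs_sub_comm ((b.1 : ℤ)), abs_sub_comm ((b.2 : ℤ))]
    exact h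
  loopless := by constructor; intro a h; simp at h


/-! The branch sets are ordered by their least vertices. A walk of length at most `s` in `H`
lifts to a walk of length at most `2rs + 2r + s` in `G` through the branch sets it visits; cutting
the lift at its first vertex below the least vertex of the starting branch set yields a vertex of
the strong reachability set in `G` lying in the target branch set, and distinct targets give
distinct vertices because branch sets are disjoint. Since `G` may be infinite, the least vertex of
a branch set has to be found: every short walk from a fixed vertex descends to its endpoint through
finitely many iterated strong reachability sets. -/

variable {G : SimpleGraph V} {H : SimpleGraph W}

noncomputable abbrev IsLinearOrder.linearOrder (le : V → V → Prop) [IsLinearOrder V le] :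
    LinearOrder V where
  le := le
  le_refl := refl_of le
  le_trans _ _ _ := trans_of le
  le_antisymm _ _ := antisymm_of le
  le_total := total_of le
  toDecidableLE := Classical.decRel _

theorem scolLE_iff {s c : ℕ} :
    ScolLE G s c ↔ ∃ _ : LinearOrder V,
      ∀ v, (RSet G (· ≤ ·) v s).Finite ∧ (RSet G (· ≤ ·) v s).ncard ≤ c := by
  constructor
  · rintro ⟨le, hle, hR⟩
    exact ⟨IsLinearOrder.linearOrder le, hR⟩
  · rintro ⟨_, hR⟩
    exact ⟨(· ≤ ·), inferInstance, hR⟩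

theorem RSet_mono {le : V → V → Prop} (v : V) {s t : ℕ} (hst : s ≤ t) :
    RSet G le v s ⊆ RSet G le v t := by
  rintro w ⟨hwv, p, hp, hint⟩
  exact ⟨hwv, p, hp.trans hst, hint⟩

theorem Set.finite_and_ncard_le_of_pairwise_disjoint {μ : W → Set V}
    (hμ : Pairwise fun w w' => Disjoint (μ w) (μ w')) {A : Set W} {B : Set V} (hB : B.Finite)
    (hA : ∀ a ∈ A, ∃ x ∈ B, x ∈ μ a) : A.Finite ∧ A.ncard ≤ B.ncard := by
  choose f hfB hfμ using hA
  have hf : Function.Injective fun a : A => (⟨f a a.2, hfB a a.2⟩ : B) := by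
    rintro ⟨a, ha⟩ ⟨b, hb⟩ hab
    by_contra hne
    exact (hμ fun h => hne (Subtype.ext h)).ne_of_mem (hfμ a ha) (hfμ b hb)
      (congrArg Subtype.val hab)
  have : Finite B := hB
  exact ⟨Finite.of_injective _ hf, Nat.card_le_card_of_injective _ hf⟩

namespace SimpleGraph.Walk

theorem exists_eq_append_first (P : V → Prop) :
    ∀ {v z : V} (q : G.Walk v z), (∃ x ∈ q.support, P x) →
      ∃ (x : V) (q₁ : G.Walk v x) (q₂ : G.Walk x z),
        q = q₁.append q₂ ∧ P x ∧ ∀ u ∈ q₁.support, u ≠ x → ¬ P u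
  | _, _, .nil, ⟨x, hx, hPx⟩ => by
    obtain rfl := List.mem_singleton.mp hx
    exact ⟨x, .nil, .nil, rfl, hPx, by simp⟩
  | v, _, .cons hvy q, ⟨x, hx, hPx⟩ => by
    by_cases hPv : P v
    · exact ⟨v, .nil, .cons hvy q, rfl, hPv, by simp⟩
    · have hxq : x ∈ q.support := by
        rcases List.mem_cons.mp hx with rfl | hxq
        · exact absurd hPx hPv
        · exact hxq
      obtain ⟨y, q₁, q₂, rfl, hPy, hfirst⟩ := exists_eq_append_first P q ⟨x, hxq, hPx⟩
      refine ⟨y, .cons hvy q₁, q₂, rfl, hPy, ?_⟩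
      simp only [support_cons, List.mem_cons, forall_eq_or_imp]
      exact ⟨fun _ => hPv, hfirst⟩

theorem exists_walk_support_subset {S : Set V} :
    ∀ {a b : S} (p : (G.induce S).Walk a b),
      ∃ q : G.Walk a b, q.length = p.length ∧ ∀ x ∈ q.support, x ∈ S
  | a, _, .nil => ⟨.nil, rfl, by simp⟩
  | a, _, .cons h p => by
    obtain ⟨q, hq, hqS⟩ := exists_walk_support_subset p
    refine ⟨.cons h q, congrArg (· + 1) hq, fun x hx => ?_⟩
    rcases List.mem_cons.mp hx with rfl | hx
    exacts [a.2, hqS x hx]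

end SimpleGraph.Walk

section LinearOrder

variable [LinearOrder V]

theorem SimpleGraph.Walk.exists_mem_RSet_of_lt {v z : V} (q : G.Walk v z)
    (h : ∃ y ∈ q.support, y < v) :
    ∃ (x : V) (q₁ : G.Walk v x) (q₂ : G.Walk x z),
      q = q₁.append q₂ ∧ x < v ∧ x ∈ RSet G (· ≤ ·) v q₁.length := by
  obtain ⟨x, q₁, q₂, rfl, hxv, hfirst⟩ := q.exists_eq_append_first (· < v) h
  exact ⟨x, q₁, q₂, rfl, hxv, hxv.le, q₁, le_rfl,
    fun u hu huv hux => ⟨not_lt.mp (hfirst u hu hux), huv⟩⟩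

def iterRSet (G : SimpleGraph V) : ℕ → V → Set V
  | 0, v => {v}
  | k + 1, v => insert v (⋃ u ∈ RSet G (· ≤ ·) v (k + 1), iterRSet G k u)

theorem self_mem_iterRSet (k : ℕ) (v : V) : v ∈ iterRSet G k v := by
  cases k <;> simp [iterRSet]

theorem iterRSet_finite {k : ℕ} (hfin : ∀ v, (RSet G (· ≤ ·) v k).Finite) {j : ℕ} (hj : j ≤ k)
    (v : V) : (iterRSet G j v).Finite := by
  induction j generalizing v with
  | zero => exact Set.finite_singleton v
  | succ j ih =>
    exact ((hfin v).subset (RSet_mono v hj)).biUnion (fun u _ => ih (by omega) u) |>.insert v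

theorem SimpleGraph.Walk.exists_mem_iterRSet_le (k : ℕ) {v z : V} (q : G.Walk v z)
    (hq : q.length ≤ k) : ∃ m ∈ iterRSet G k v, m ∈ q.support ∧ m ≤ z := by
  induction k generalizing v z with
  | zero =>
    obtain rfl := q.eq_of_length_eq_zero (by omega)
    exact ⟨v, self_mem_iterRSet 0 v, q.start_mem_support, le_rfl⟩
  | succ k ih =>
    by_cases h : ∃ y ∈ q.support, y < v
    · obtain ⟨x, q₁, q₂, rfl, hxv, hxR⟩ := q.exists_mem_RSet_of_lt h
      have hq₁ : q₁.length ≠ 0 := fun h0 => hxv.ne (q₁.eq_of_length_eq_zero h0).symm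
      rw [length_append] at hq
      obtain ⟨m, hm, hmq, hmz⟩ := ih q₂ (by omega)
      exact ⟨m, Or.inr (Set.mem_biUnion (RSet_mono v (by omega) hxR) hm),
        (mem_support_append_iff _ _).mpr (Or.inr hmq), hmz⟩
    · simp only [not_exists, not_and, not_lt] at h
      exact ⟨v, self_mem_iterRSet _ v, q.start_mem_support, h z q.end_mem_support⟩

theorem exists_isLeast_of_forall_walk {k : ℕ} (hfin : ∀ v, (RSet G (· ≤ ·) v k).Finite)
    {S : Set V} {a : V} (ha : a ∈ S)
    (hS : ∀ z ∈ S, ∃ q : G.Walk a z, q.length ≤ k ∧ ∀ x ∈ q.support, x ∈ S) :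
    ∃ m, IsLeast S m := by
  obtain ⟨m, ⟨-, hmS⟩, hmin⟩ := Set.exists_min_image (iterRSet G k a ∩ S) id
    ((iterRSet_finite hfin le_rfl a).inter_of_left S) ⟨a, self_mem_iterRSet k a, ha⟩
  refine ⟨m, hmS, fun z hz => ?_⟩
  obtain ⟨q, hqk, hqS⟩ := hS z hz
  obtain ⟨m', hm', hm'q, hm'z⟩ := q.exists_mem_iterRSet_le k hqk
  exact (hmin m' ⟨hm', hqS m' hm'q⟩).trans hm'z

end LinearOrder

namespace IsShallowMinorModel

variable {μ : W → Set V} {r : ℕ}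

theorem exists_walk_of_mem (hμ : IsShallowMinorModel H G r μ) {w : W} {a b : V}
    (ha : a ∈ μ w) (hb : b ∈ μ w) :
    ∃ q : G.Walk a b, q.length ≤ 2 * r ∧ ∀ x ∈ q.support, x ∈ μ w := by
  obtain ⟨o, ho⟩ := hμ.2.1 w
  obtain ⟨pa, hpa⟩ := (hμ.1 w).exists_walk_length_eq_dist o ⟨a, ha⟩
  obtain ⟨pb, hpb⟩ := (hμ.1 w).exists_walk_length_eq_dist o ⟨b, hb⟩
  obtain ⟨q, hq, hqμ⟩ := (pa.reverse.append pb).exists_walk_support_subset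
  refine ⟨q, ?_, hqμ⟩
  rw [hq, Walk.length_append, Walk.length_reverse, hpa, hpb]
  linarith [ho ⟨a, ha⟩, ho ⟨b, hb⟩]

theorem exists_walk_of_walk (hμ : IsShallowMinorModel H G r μ) {w w' : W} (p : H.Walk w w')
    {a b : V} (ha : a ∈ μ w) (hb : b ∈ μ w') :
    ∃ q : G.Walk a b, q.length ≤ 2 * r * (p.length + 1) + p.length ∧
      ∀ x ∈ q.support, ∃ u ∈ p.support, x ∈ μ u := by
  induction p generalizing a with
  | nil =>
    obtain ⟨q, hq, hqμ⟩ := hμ.exists_walk_of_mem ha hb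
    exact ⟨q, by simpa using hq, fun x hx => ⟨_, Walk.start_mem_support _, hqμ x hx⟩⟩
  | @cons w w₁ _ hww₁ p ih =>
    obtain ⟨a', ha', b', hb', ha'b'⟩ := hμ.2.2.2 hww₁
    obtain ⟨q₀, hq₀, hq₀μ⟩ := hμ.exists_walk_of_mem ha ha'
    obtain ⟨q₁, hq₁, hq₁μ⟩ := ih hb' hb
    refine ⟨q₀.append (.cons ha'b' q₁), ?_, ?_⟩
    · simp only [Walk.length_append, Walk.length_cons]
      linarith
    · intro x hx
      simp only [Walk.mem_support_append_iff, Walk.support_cons, List.mem_cons] at hx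
      rcases hx with hx | rfl | hx
      · exact ⟨w, Walk.start_mem_support _, hq₀μ x hx⟩
      · exact ⟨w, Walk.start_mem_support _, ha'⟩
      · obtain ⟨u, hu, hxu⟩ := hq₁μ x hx
        exact ⟨u, List.mem_cons_of_mem _ hu, hxu⟩

theorem exists_isLeast [LinearOrder V] (hμ : IsShallowMinorModel H G r μ)
    (hfin : ∀ v, (RSet G (· ≤ ·) v (2 * r)).Finite) (w : W) : ∃ m, IsLeast (μ w) m := by
  obtain ⟨⟨o, ho⟩, -⟩ := hμ.2.1 w
  exact exists_isLeast_of_forall_walk hfin ho fun z hz => hμ.exists_walk_of_mem ho hz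

theorem injective_of_mem (hμ : IsShallowMinorModel H G r μ) {ρ : W → V}
    (hρ : ∀ w, ρ w ∈ μ w) : Function.Injective ρ := by
  intro a b hab
  by_contra hne
  exact (hμ.2.2.1 hne).ne_of_mem (hρ a) (hρ b) hab

theorem exists_mem_RSet [LinearOrder V] (hμ : IsShallowMinorModel H G r μ) {ρ : W → V}
    (hρ : ∀ w, IsLeast (μ w) (ρ w)) {s : ℕ} {w w' : W}
    (hw' : w' ∈ RSet H (fun a b => ρ a ≤ ρ b) w s) :
    ∃ x ∈ RSet G (· ≤ ·) (ρ w) (2 * r * s + 2 * r + s), x ∈ μ w' := by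
  obtain ⟨hw'w, p, hps, hint⟩ := hw'
  have hρinj := hμ.injective_of_mem fun w => (hρ w).1
  by_cases heq : w' = w
  · subst heq
    exact ⟨ρ w', ⟨le_rfl, .nil, Nat.zero_le _, by simp⟩, (hρ w').1⟩
  have hlt : ρ w' < ρ w := lt_of_le_of_ne hw'w (hρinj.ne heq)
  obtain ⟨q, hq, hqμ⟩ := hμ.exists_walk_of_walk p (hρ w).1 (hρ w').1
  obtain ⟨x, q₁, q₂, rfl, hxw, hxR⟩ := q.exists_mem_RSet_of_lt ⟨_, q.end_mem_support, hlt⟩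
  have hlen : q₁.length ≤ 2 * r * s + 2 * r + s := by
    rw [Walk.length_append] at hq
    nlinarith
  refine ⟨x, RSet_mono _ hlen hxR, ?_⟩
  obtain ⟨u, hup, hxu⟩ := hqμ x ((Walk.mem_support_append_iff _ _).mpr
    (Or.inl q₁.end_mem_support))
  have huw : u ≠ w := by
    rintro rfl
    exact (hρ u).2 hxu |>.not_gt hxw
  obtain rfl : u = w' := by
    by_contra huw'
    exact ((hρ u).2 hxu |>.trans_lt hxw).not_ge (hint u hup huw huw').1
  exact hxu

end IsShallowMinorModel

theorem scol_shallowMinor_general {V W : Type} (G : SimpleGraph V) (H : SimpleGraph W)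
    (r s : ℕ) (hm : ShallowMinor H G r) (c : ℕ)
    (hc : ScolLE G (2 * r * s + 2 * r + s) c) :
    ScolLE H s c := by
  obtain ⟨μ, hμ⟩ := hm
  obtain ⟨_, hR⟩ := scolLE_iff.mp hc
  have hfin : ∀ v, (RSet G (· ≤ ·) v (2 * r)).Finite :=
    fun v => (hR v).1.subset (RSet_mono v (by omega))
  choose ρ hρ using hμ.exists_isLeast hfin
  let _ : LinearOrder W := LinearOrder.lift' ρ (hμ.injective_of_mem fun w => (hρ w).1)
  refine scolLE_iff.mpr ⟨inferInstance, fun w => ?_⟩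
  obtain ⟨hfinw, hcard⟩ := hR (ρ w)
  obtain ⟨hSfin, hScard⟩ := Set.finite_and_ncard_le_of_pairwise_disjoint hμ.2.2.1 hfinw
    fun w' hw' => hμ.exists_mem_RSet hρ hw'
  exact ⟨hSfin, hScard.trans hcard⟩

/-- Strong colouring numbers are well-behaved under shallow minors:
if `H` is an `r`-shallow minor of `G` then `scol_s(H) ≤ scol_{2rs+2r+s}(G)`. -/
theorem scol_shallowMinor {V W : Type} (G : SimpleGraph V) (H : SimpleGraph W)
    (r s : ℕ) (hs : 1 ≤ s) (hm : ShallowMinor H G r) (c : ℕ)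
    (hc : ScolLE G (2 * r * s + 2 * r + s) c) :
    ScolLE H s c :=
  scol_shallowMinor_general G H r s hm c hc
end

section
/- For every graph G, every r-shallow minor H of G, and every integer s ≥ 1, the s-weak colouring number satisfies wcol_s(H) ≤ wcol_{2rs+2r+s}(G). -/
open SimpleGraph

variable {V W : Type}

infixl:70 " ⊠ " => strongProd

open SimpleGraph
variable {V W : Type}

/-!
Order `G` by a witness of `wcol_{2rs+2r+s}(G) ≤ c`, represent each branch set `μ w` by its least
vertex `x w`, and order `H` by `w ↦ x w`. Two vertices of a branch set are joined inside it by a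
walk of length at most `2r`, so an `H`-walk of length `ℓ` lifts to a `G`-walk of length at most
`2r + (2r+1)ℓ` through the branch sets of its vertices. Every vertex of `μ u` lies above `x u`,
so lifting a walk that witnesses `w ∈ Q(H, v, s)` witnesses `x w ∈ Q(G, x v, 2rs+2r+s)`; and `x` is
injective since the branch sets are disjoint.
-/

open Function

theorem Set.Finite.exists_least_of_total {α : Type*} (r : α → α → Prop) [IsTrans α r]
    [Std.Total r] {s : Set α} (hs : s.Finite) (hne : s.Nonempty) :
    ∃ m ∈ s, ∀ y ∈ s, r m y := by
  induction s, hs using Set.Finite.induction_on with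
  | empty => exact absurd hne Set.not_nonempty_empty
  | @insert a s _ _ ih =>
    rcases s.eq_empty_or_nonempty with rfl | hs
    · exact ⟨a, by simp, by simpa using refl_of r a⟩
    obtain ⟨m, hm, hmin⟩ := ih hs
    rcases total_of r a m with ham | hma
    · exact ⟨a, Set.mem_insert a s, Set.forall_mem_insert.2
        ⟨refl_of r a, fun y hy => trans_of r ham (hmin y hy)⟩⟩
    · exact ⟨m, Set.mem_insert_of_mem a hm, Set.forall_mem_insert.2 ⟨hma, hmin⟩⟩

theorem exists_walk_length_le_two_mul_of_radius_le (G : SimpleGraph V) {S : Set V} {r : ℕ}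
    (hconn : (G.induce S).Connected) (hrad : ∃ c : S, ∀ u : S, (G.induce S).dist c u ≤ r)
    {y z : V} (hy : y ∈ S) (hz : z ∈ S) :
    ∃ p : G.Walk y z, p.length ≤ 2 * r ∧ ∀ u ∈ p.support, u ∈ S := by
  obtain ⟨c, hc⟩ := hrad
  obtain ⟨p₁, hp₁⟩ := (hconn.preconnected c ⟨y, hy⟩).exists_walk_length_eq_dist
  obtain ⟨p₂, hp₂⟩ := (hconn.preconnected c ⟨z, hz⟩).exists_walk_length_eq_dist
  have hp : (p₁.reverse.append p₂).length ≤ 2 * r := by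
    have h₁ := hc ⟨y, hy⟩
    have h₂ := hc ⟨z, hz⟩
    rw [Walk.length_append, Walk.length_reverse]
    omega
  -- Stated for an arbitrary induced walk: on the walk retyped as `G.Walk y z`,
  -- `Walk.support_map` cannot be rewritten.
  have hS : ∀ {a b : S} (p : (G.induce S).Walk a b),
      ∀ u ∈ (p.map (Embedding.induce S).toHom).support, u ∈ S := by
    intro a b p u hu
    rw [Walk.support_map, List.mem_map] at hu
    obtain ⟨u', -, rfl⟩ := hu
    exact u'.2
  exact ⟨(p₁.reverse.append p₂).map (Embedding.induce S).toHom,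
    (Walk.length_map _ _).trans_le hp, hS _⟩

theorem mem_QSet_of_forall_rel_support (G : SimpleGraph V) (le : V → V → Prop) {v y m : V}
    {k : ℕ} (p : G.Walk v y) (hk : p.length ≤ k) (hm : m ∈ p.support)
    (hmin : ∀ u ∈ p.support, le m u) : m ∈ QSet G le v k := by
  classical
  exact ⟨hmin v p.start_mem_support, p.takeUntil m hm, (p.length_takeUntil_le_length hm).trans hk,
    fun _ hu _ hne => ⟨hmin _ (p.support_takeUntil_subset_support hm hu), hne⟩⟩

/-- The least vertex of `S` exists even when `S` is infinite: it is the least vertex of the finite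
set `Q(G, z₀, k) ∩ S`, because the least vertex on a walk from `z₀` lies in `Q(G, z₀, k)`. -/
theorem exists_least_of_QSet_finite (G : SimpleGraph V) (le : V → V → Prop) [IsTrans V le]
    [Std.Total le] {S : Set V} {z₀ : V} {k : ℕ} (hz₀ : z₀ ∈ S)
    (hwalk : ∀ y ∈ S, ∃ p : G.Walk z₀ y, p.length ≤ k ∧ ∀ u ∈ p.support, u ∈ S)
    (hQ : (QSet G le z₀ k).Finite) : ∃ m ∈ S, ∀ y ∈ S, le m y := by
  have hz₀Q : z₀ ∈ QSet G le z₀ k :=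
    mem_QSet_of_forall_rel_support G le Walk.nil (Nat.zero_le k) (Walk.start_mem_support _)
      (by simpa using refl_of le z₀)
  obtain ⟨m, ⟨-, hmS⟩, hm⟩ :=
    (hQ.inter_of_left S).exists_least_of_total le ⟨z₀, hz₀Q, hz₀⟩
  refine ⟨m, hmS, fun y hy => ?_⟩
  obtain ⟨p, hpk, hpS⟩ := hwalk y hy
  obtain ⟨m', hm', hm'min⟩ :=
    p.support.finite_toSet.exists_least_of_total le ⟨z₀, p.start_mem_support⟩
  have hm'Q : m' ∈ QSet G le z₀ k := mem_QSet_of_forall_rel_support G le p hpk hm' hm'min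
  exact trans_of le (hm m' ⟨hm'Q, hpS m' hm'⟩) (hm'min y p.end_mem_support)

namespace IsShallowMinorModel

variable {H : SimpleGraph W} {G : SimpleGraph V} {r : ℕ} {μ : W → Set V}

theorem exists_least (hμ : IsShallowMinorModel H G r μ) (le : V → V → Prop) [IsTrans V le]
    [Std.Total le] {k : ℕ} (hk : 2 * r ≤ k) (hQ : ∀ v, (QSet G le v k).Finite) (w : W) :
    ∃ m ∈ μ w, ∀ y ∈ μ w, le m y := by
  obtain ⟨⟨z₀, hz₀⟩, -⟩ := hμ.2.1 w
  refine exists_least_of_QSet_finite G le hz₀ (fun y hy => ?_) (hQ z₀)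
  obtain ⟨p, hp, hpS⟩ := exists_walk_length_le_two_mul_of_radius_le G (hμ.1 w) (hμ.2.1 w) hz₀ hy
  exact ⟨p, hp.trans hk, hpS⟩

theorem exists_walk_lift (hμ : IsShallowMinorModel H G r μ) {a b : W} (q : H.Walk a b)
    {y z : V} (hy : y ∈ μ a) (hz : z ∈ μ b) :
    ∃ P : G.Walk y z, P.length ≤ 2 * r + (2 * r + 1) * q.length ∧
      ∀ t ∈ P.support, ∃ u ∈ q.support, t ∈ μ u := by
  induction q generalizing y with
  | @nil a =>
    obtain ⟨p, hp, hpS⟩ := exists_walk_length_le_two_mul_of_radius_le G (hμ.1 a) (hμ.2.1 a) hy hz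
    exact ⟨p, by simpa using hp, fun t ht => ⟨a, by simp, hpS t ht⟩⟩
  | @cons a a' b hadj q ih =>
    obtain ⟨y', hy', z', hz', hGadj⟩ := hμ.2.2.2 hadj
    obtain ⟨p, hp, hpS⟩ := exists_walk_length_le_two_mul_of_radius_le G (hμ.1 a) (hμ.2.1 a) hy hy'
    obtain ⟨P, hP, hPS⟩ := ih hz' hz
    refine ⟨p.append (Walk.cons hGadj P), ?_, ?_⟩
    · simp only [Walk.length_append, Walk.length_cons]
      nlinarith
    · intro t ht
      simp only [Walk.mem_support_append_iff, Walk.support_cons, List.mem_cons] at ht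
      rcases ht with ht | rfl | ht
      · exact ⟨a, by simp, hpS t ht⟩
      · exact ⟨a, by simp, hy'⟩
      · obtain ⟨u, hu, htu⟩ := hPS t ht
        exact ⟨u, by simp [hu], htu⟩

theorem image_QSet_subset (hμ : IsShallowMinorModel H G r μ) (le : V → V → Prop) [IsPreorder V le]
    {x : W → V} (hx : ∀ w, x w ∈ μ w) (hxmin : ∀ w, ∀ y ∈ μ w, le (x w) y) (v : W) (s : ℕ) :
    x '' QSet H (le on x) v s ⊆ QSet G le (x v) (2 * r * s + 2 * r + s) := by
  rintro _ ⟨w, ⟨hwv, q, hq, hqint⟩, rfl⟩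
  obtain ⟨P, hP, hPS⟩ := hμ.exists_walk_lift q (hx v) (hx w)
  refine ⟨hwv, P, by nlinarith, fun t ht _ htw => ⟨?_, htw⟩⟩
  obtain ⟨u, hu, htu⟩ := hPS t ht
  have hwu : le (x w) (x u) := by
    by_cases huv : u = v
    · exact huv ▸ hwv
    by_cases huw : u = w
    · exact huw ▸ refl_of le (x w)
    exact (hqint u hu huv huw).1
  exact trans_of le hwu (hxmin u t htu)

end IsShallowMinorModel

theorem wcol_shallowMinor_general {V W : Type} (G : SimpleGraph V) (H : SimpleGraph W)
    (r s : ℕ) (hm : ShallowMinor H G r) (c : ℕ)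
    (hc : WcolLE G (2 * r * s + 2 * r + s) c) :
    WcolLE H s c := by
  obtain ⟨μ, hμ⟩ := hm
  obtain ⟨le, hle, hQ⟩ := hc
  choose x hx hxmin using hμ.exists_least le (by omega) (fun v => (hQ v).1)
  have hxinj : x.Injective := fun w w' h =>
    by_contra fun hne => (hμ.2.2.1 hne).ne_of_mem (hx w) (h ▸ hx w') rfl
  refine ⟨le on x, hxinj.isLinearOrder_onFun le, fun v => ?_⟩
  have himg := hμ.image_QSet_subset le hx hxmin v s
  obtain ⟨hfin, hcard⟩ := hQ (x v)
  refine ⟨(hfin.subset himg).of_finite_image hxinj.injOn, ?_⟩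
  calc (QSet H (le on x) v s).ncard = (x '' QSet H (le on x) v s).ncard :=
        (Set.ncard_image_of_injective _ hxinj).symm
    _ ≤ (QSet G le (x v) (2 * r * s + 2 * r + s)).ncard := Set.ncard_le_ncard himg hfin
    _ ≤ c := hcard

/-- Weak colouring numbers are well-behaved under shallow minors:
if `H` is an `r`-shallow minor of `G` then `wcol_s(H) ≤ wcol_{2rs+2r+s}(G)`. -/
theorem wcol_shallowMinor {V W : Type} (G : SimpleGraph V) (H : SimpleGraph W)
    (r s : ℕ) (hs : 1 ≤ s) (hm : ShallowMinor H G r) (c : ℕ)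
    (hc : WcolLE G (2 * r * s + 2 * r + s) c) :
    WcolLE H s c :=
  wcol_shallowMinor_general G H r s hm c hc
end
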